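/- arXiv:1704.02472 — 2 statements merged into one kernel-verified Lean document; each statement's English description precedes it below -/
import Mathlib

section
/- For every positive integer n, the dihedral group D_{2n} of order 2n satisfies 2√n ≤ Δ[D_{2n}] ≤ 2·Δ[C_n], and consequently √2 ≤ ð[D_{2n}] ≤ √2·ð[C_n]. -/
/-- A finset `B` is a difference basis of the group `G` if every element of `G`
can be written as `a * b⁻¹` with `a b ∈ B`. -/
def IsDiffBasis {G : Type*} [Group G] (B : Finset G) : Prop :=
  ∀ g : G, ∃ a ∈ B, ∃ b ∈ B, g = a * b⁻¹

/-- The difference size `Δ[G]` of a group `G`: the smallest cardinality of a difference basis. -/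
noncomputable def diffSize (G : Type*) [Group G] : ℕ :=
  sInf {k | ∃ B : Finset G, B.card = k ∧ IsDiffBasis B}

/-- The difference characteristic `ð[G] = Δ[G]/√|G|`. -/
noncomputable def diffChar (G : Type*) [Group G] : ℝ :=
  (diffSize G : ℝ) / Real.sqrt (Nat.card G)

/-!
Write `D_{2n}` as rotations `r i` and reflections `sr i`. If `B` is a difference basis with
`X` rotations and `Y` reflections, then every reflection `sr k` must be a quotient of a rotation
and a reflection of `B`, which forces `k ∈ Y - X`; hence `n ≤ |X| |Y|` and by AM-GM
`2 √n ≤ |X| + |Y| ≤ |B|`. Conversely, if `A` is a difference basis of `C_n`, then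
`r(A) ∪ sr(A)` is one of `D_{2n}`, so `Δ[D_{2n}] ≤ 2 Δ[C_n]`. The bounds on `ð` follow from
`|D_{2n}| = 2n`.
-/

open Finset DihedralGroup
open scoped Pointwise

section DiffSize

variable {G : Type*} [Group G]

lemma IsDiffBasis.univ [Fintype G] : IsDiffBasis (univ : Finset G) :=
  fun g => ⟨g, mem_univ _, 1, mem_univ _, by simp⟩

lemma diffSize_le_card {B : Finset G} (hB : IsDiffBasis B) : diffSize G ≤ #B :=
  Nat.sInf_le ⟨B, rfl, hB⟩

lemma exists_isDiffBasis_card_eq_diffSize [Finite G] :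
    ∃ B : Finset G, #B = diffSize G ∧ IsDiffBasis B :=
  have := Fintype.ofFinite G
  Nat.sInf_mem (s := {k | ∃ B : Finset G, #B = k ∧ IsDiffBasis B}) ⟨_, univ, rfl, .univ⟩

-- Covers the case of a subgroup of index `2`, with `s` outside it.
lemma diffSize_le_two_mul_of_cover {H : Type*} [Group H] [Finite H] (f : H →* G) (s : G)
    (hcover : ∀ g : G, ∃ h, g = f h ∨ g = s * f h) :
    diffSize G ≤ 2 * diffSize H := by
  classical
  obtain ⟨A, hA, hAbasis⟩ := exists_isDiffBasis_card_eq_diffSize (G := H)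
  have hbasis : IsDiffBasis (A.image f ∪ A.image (s * f ·)) := by
    intro g
    obtain ⟨h, hg⟩ := hcover g
    obtain ⟨a, ha, b, hb, rfl⟩ := hAbasis h
    rcases hg with rfl | rfl
    · exact ⟨f a, mem_union_left _ (mem_image_of_mem _ ha),
        f b, mem_union_left _ (mem_image_of_mem _ hb), by simp⟩
    · exact ⟨s * f a, mem_union_right _ (mem_image_of_mem _ ha),
        f b, mem_union_left _ (mem_image_of_mem _ hb), by simp [mul_assoc]⟩
  calc diffSize G ≤ #(A.image f ∪ A.image (s * f ·)) := diffSize_le_card hbasis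
    _ ≤ #A + #A := (card_union_le _ _).trans (add_le_add card_image_le card_image_le)
    _ = 2 * diffSize H := by rw [hA, two_mul]

end DiffSize

lemma Real.two_mul_sqrt_le_add {m x y : ℝ} (hxy : 0 ≤ x + y) (h : m ≤ x * y) :
    2 * √m ≤ x + y := by
  have : √m ≤ (x + y) / 2 :=
    Real.sqrt_le_iff.mpr ⟨by linarith, by nlinarith [sq_nonneg (x - y)]⟩
  linarith

namespace DihedralGroup

variable {n : ℕ}

def rotationHom : Multiplicative (ZMod n) →* DihedralGroup n where
  toFun a := r a.toAdd
  map_one' := rfl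
  map_mul' _ _ := (r_mul_r _ _).symm

@[simp]
lemma rotationHom_ofAdd (i : ZMod n) : rotationHom (.ofAdd i) = r i :=
  rfl

lemma diffSize_le_two_mul_diffSize_zmod [NeZero n] :
    diffSize (DihedralGroup n) ≤ 2 * diffSize (Multiplicative (ZMod n)) :=
  diffSize_le_two_mul_of_cover rotationHom (sr 0) fun
    | r i => ⟨.ofAdd i, .inl rfl⟩
    | sr i => ⟨.ofAdd i, .inr (by rw [rotationHom_ofAdd, sr_mul_r, zero_add])⟩

variable [NeZero n] (B : Finset (DihedralGroup n))

def rotationIndices : Finset (ZMod n) := {i | r i ∈ B}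

def reflectionIndices : Finset (ZMod n) := {i | sr i ∈ B}

variable {B}

@[simp]
lemma mem_rotationIndices {i : ZMod n} : i ∈ rotationIndices B ↔ r i ∈ B := by
  simp [rotationIndices]

@[simp]
lemma mem_reflectionIndices {i : ZMod n} : i ∈ reflectionIndices B ↔ sr i ∈ B := by
  simp [reflectionIndices]

variable (B)

lemma card_rotationIndices_add_card_reflectionIndices_le :
    #(rotationIndices B) + #(reflectionIndices B) ≤ #B := by
  rw [← card_disjSum]
  refine card_le_card_of_injOn equivSum.symm ?_ equivSum.symm.injective.injOn
  rintro (i | i) hi <;> simpa using hi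

lemma univ_subset_reflectionIndices_sub_rotationIndices (hB : IsDiffBasis B) :
    (univ : Finset (ZMod n)) ⊆ reflectionIndices B - rotationIndices B := by
  intro k _
  obtain ⟨a, ha, b, hb, hk⟩ := hB (sr k)
  rw [mem_sub]
  rcases a with i | i <;> rcases b with j | j <;>
    simp only [inv_r, inv_sr, r_mul_r, r_mul_sr, sr_mul_r, sr_mul_sr, reduceCtorEq, sr.injEq] at hk
  · exact ⟨j, mem_reflectionIndices.mpr hb, i, mem_rotationIndices.mpr ha, hk.symm⟩
  · exact ⟨i, mem_reflectionIndices.mpr ha, j, mem_rotationIndices.mpr hb, by rw [hk, sub_eq_add_neg]⟩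

lemma le_card_reflectionIndices_mul_card_rotationIndices (hB : IsDiffBasis B) :
    n ≤ #(reflectionIndices B) * #(rotationIndices B) :=
  calc n = #(univ : Finset (ZMod n)) := by simp
    _ ≤ #(reflectionIndices B - rotationIndices B) :=
      card_le_card (univ_subset_reflectionIndices_sub_rotationIndices B hB)
    _ ≤ _ := card_sub_le

lemma two_mul_sqrt_le_card_of_isDiffBasis (hB : IsDiffBasis B) : 2 * √n ≤ #B := by
  have hsum : (#(rotationIndices B) + #(reflectionIndices B) : ℝ) ≤ #B := by
    exact_mod_cast card_rotationIndices_add_card_reflectionIndices_le B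
  have hprod : (n : ℝ) ≤ #(rotationIndices B) * #(reflectionIndices B) := by
    rw [mul_comm]; exact_mod_cast le_card_reflectionIndices_mul_card_rotationIndices B hB
  exact (Real.two_mul_sqrt_le_add (by positivity) hprod).trans hsum

end DihedralGroup

theorem stmt5 (n : ℕ) (hn : 0 < n) :
    2 * Real.sqrt n ≤ (diffSize (DihedralGroup n) : ℝ) ∧
    diffSize (DihedralGroup n) ≤ 2 * diffSize (Multiplicative (ZMod n)) ∧
    Real.sqrt 2 ≤ diffChar (DihedralGroup n) ∧
    diffChar (DihedralGroup n) ≤ Real.sqrt 2 * diffChar (Multiplicative (ZMod n)) := by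
  have : NeZero n := ⟨hn.ne'⟩
  have hlower : 2 * √n ≤ (diffSize (DihedralGroup n) : ℝ) := by
    obtain ⟨B, hB, hbasis⟩ := exists_isDiffBasis_card_eq_diffSize (G := DihedralGroup n)
    exact hB ▸ two_mul_sqrt_le_card_of_isDiffBasis B hbasis
  have hupper := diffSize_le_two_mul_diffSize_zmod (n := n)
  have hcharD : diffChar (DihedralGroup n) = diffSize (DihedralGroup n) / (√2 * √n) := by
    rw [diffChar, nat_card, Nat.cast_mul, Nat.cast_two, Real.sqrt_mul zero_le_two]
  have hcharC : diffChar (Multiplicative (ZMod n)) = diffSize (Multiplicative (ZMod n)) / √n := by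
    rw [diffChar, Nat.card_congr Multiplicative.toAdd, Nat.card_zmod]
  have hsqrt2 : √2 * √2 = 2 := Real.mul_self_sqrt zero_le_two
  have hsqrtn : 0 < √n := Real.sqrt_pos.mpr (by exact_mod_cast hn)
  refine ⟨hlower, hupper, ?_, ?_⟩
  · rw [hcharD, le_div_iff₀ (by positivity), ← mul_assoc, hsqrt2]
    exact hlower
  · calc diffChar (DihedralGroup n)
        ≤ 2 * diffSize (Multiplicative (ZMod n)) / (√2 * √n) := by
          rw [hcharD]; gcongr; exact_mod_cast hupper
      _ = √2 * diffChar (Multiplicative (ZMod n)) := by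
          rw [hcharC]; field_simp; norm_num [mul_comm]
end

section
/- For every prime power q ≥ 2, the cyclic group of order q² − 1 satisfies Δ[C_{q²−1}] ≤ q − 1 + Δ[C_{q−1}]. -/
open Finset Polynomial

lemma diffSize_le {G : Type*} [Group G] {B : Finset G} (h : IsDiffBasis B) :
    diffSize G ≤ B.card := Nat.sInf_le ⟨B, rfl, h⟩

lemma exists_diffBasis (G : Type*) [Group G] [Fintype G] :
    ∃ B : Finset G, B.card = diffSize G ∧ IsDiffBasis B := by
  have h : IsDiffBasis (univ : Finset G) :=
    fun g => ⟨g, mem_univ _, 1, mem_univ _, by simp⟩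
  have hne : {k | ∃ B : Finset G, B.card = k ∧ IsDiffBasis B}.Nonempty :=
    ⟨(univ : Finset G).card, univ, rfl, h⟩
  exact Nat.sInf_mem hne

lemma IsDiffBasis.image {G H : Type*} [Group G] [Group H] [DecidableEq H]
    (e : G ≃* H) {B : Finset G} (h : IsDiffBasis B) : IsDiffBasis (B.image e) := by
  intro g
  obtain ⟨a, ha, b, hb, hg⟩ := h (e.symm g)
  refine ⟨e a, mem_image_of_mem _ ha, e b, mem_image_of_mem _ hb, ?_⟩
  have := congrArg e hg
  simpa using this

lemma diffSize_le_of_mulEquiv {G H : Type*} [Group G] [Group H] [Fintype G]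
    (e : G ≃* H) : diffSize H ≤ diffSize G := by
  classical
  obtain ⟨B, hB, hbasis⟩ := exists_diffBasis G
  calc diffSize H ≤ (B.image e).card := diffSize_le (hbasis.image e)
  _ ≤ B.card := card_image_le
  _ = _ := hB

lemma diffSize_eq_of_mulEquiv {G H : Type*} [Group G] [Group H] [Fintype G] [Fintype H]
    (e : G ≃* H) : diffSize G = diffSize H :=
  le_antisymm (diffSize_le_of_mulEquiv e.symm) (diffSize_le_of_mulEquiv e)

def frobSubfield (F : Type*) [Field F] (p n : ℕ) [Fact p.Prime] [CharP F p] : Subfield F where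
  carrier := {x | x ^ p ^ n = x}
  mul_mem' := by
    intro a b ha hb
    simp only [Set.mem_setOf_eq] at *
    rw [mul_pow, ha, hb]
  one_mem' := one_pow _
  add_mem' := by
    intro a b ha hb
    simp only [Set.mem_setOf_eq] at *
    rw [add_pow_char_pow, ha, hb]
  zero_mem' := by
    simp only [Set.mem_setOf_eq]
    exact zero_pow (pow_ne_zero _ (Nat.Prime.ne_zero Fact.out))
  neg_mem' := by
    intro a ha
    simp only [Set.mem_setOf_eq] at *
    rw [← neg_one_mul, mul_pow, neg_one_pow_char_pow, ha, neg_one_mul]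
  inv_mem' := by
    intro x hx
    simp only [Set.mem_setOf_eq] at *
    rw [inv_pow, hx]

lemma frobSubfield_card (F : Type*) [Field F] [Fintype F] (p n : ℕ) [Fact p.Prime] [CharP F p]
    (hn : n ≠ 0) (hF : Fintype.card F = (p ^ n) ^ 2) [Fintype ↥(frobSubfield F p n)] :
    Fintype.card ↥(frobSubfield F p n) = p ^ n := by
  classical
  set q := p ^ n with hq
  have hq1 : 1 < q := Nat.one_lt_pow hn (Fact.out : p.Prime).one_lt
  have hub : Fintype.card ↥(frobSubfield F p n) ≤ q := by
    have hsub : (univ : Finset ↥(frobSubfield F p n)).image Subtype.val ⊆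
        ((X ^ q - X : F[X]).roots).toFinset := by
      intro x hx
      simp only [mem_image] at hx
      obtain ⟨y, -, rfl⟩ := hx
      rw [Multiset.mem_toFinset, mem_roots (FiniteField.X_pow_card_sub_X_ne_zero F hq1)]
      simp only [IsRoot.def, eval_sub, eval_pow, eval_X, sub_eq_zero]
      exact y.2
    calc Fintype.card ↥(frobSubfield F p n)
        = ((univ : Finset ↥(frobSubfield F p n)).image Subtype.val).card := by
          rw [Finset.card_image_of_injective _ Subtype.val_injective, card_univ]
    _ ≤ _ := card_le_card hsub
    _ ≤ Multiset.card (X ^ q - X : F[X]).roots := Multiset.toFinset_card_le _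
    _ ≤ (X ^ q - X : F[X]).natDegree := card_roots' _
    _ = q := FiniteField.X_pow_card_sub_X_natDegree_eq F hq1
  have hlb : q ≤ Fintype.card ↥(frobSubfield F p n) := by
    obtain ⟨g, hg⟩ := IsCyclic.exists_generator (α := Fˣ)
    have hcardu : Fintype.card Fˣ = q ^ 2 - 1 := by rw [Fintype.card_units, hF]
    have horder : orderOf g = q ^ 2 - 1 := by
      rw [orderOf_eq_card_of_forall_mem_zpowers hg, Nat.card_eq_fintype_card, hcardu]
    have hfac : (q + 1) * (q - 1) = q ^ 2 - 1 := by
      have := Nat.sq_sub_sq q 1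
      simpa using this.symm
    have hdvd : q + 1 ∣ q ^ 2 - 1 := ⟨q - 1, hfac.symm⟩
    set h := g ^ (q + 1) with hh
    have horderh : orderOf h = q - 1 := by
      rw [hh, orderOf_pow_of_dvd (by omega) (horder ▸ hdvd), horder, ← hfac,
        Nat.mul_div_cancel_left _ (by omega)]
    have hmem : ∀ x : Fˣ, x ∈ Subgroup.zpowers h → ((x : F) ∈ frobSubfield F p n) := by
      intro x hx
      obtain ⟨i, rfl⟩ := Subgroup.mem_zpowers_iff.mp hx
      have hx1 : (h ^ i) ^ (q - 1) = 1 := by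
        rw [← zpow_natCast (h ^ i), ← zpow_mul, mul_comm, zpow_mul, zpow_natCast, ← horderh,
          pow_orderOf_eq_one, one_zpow]
      show ((h ^ i : Fˣ) : F) ^ q = _
      have : ((h ^ i : Fˣ) : F) ^ (q - 1) = 1 := by
        rw [← Units.val_pow_eq_pow_val, hx1, Units.val_one]
      calc ((h ^ i : Fˣ) : F) ^ q = ((h ^ i : Fˣ) : F) ^ (q - 1) * ((h ^ i : Fˣ) : F) := by
            rw [← pow_succ]; congr 1; omega
      _ = _ := by rw [this, one_mul]
    set f : ↥(Subgroup.zpowers h) → ↥(frobSubfield F p n) :=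
      fun x => ⟨((x : Fˣ) : F), hmem x x.2⟩ with hf
    have hfinj : Function.Injective f := by
      intro x y hxy
      have : ((x : Fˣ) : F) = ((y : Fˣ) : F) := congrArg Subtype.val hxy
      exact Subtype.ext (Units.ext this)
    set T : Finset ↥(frobSubfield F p n) := univ.image f with hT
    have hTcard : T.card = q - 1 := by
      rw [hT, Finset.card_image_of_injective _ hfinj, card_univ, Fintype.card_zpowers, horderh]
    have h0T : (0 : ↥(frobSubfield F p n)) ∉ T := by
      rw [hT]
      simp only [mem_image]
      rintro ⟨x, -, hx0⟩
      have : ((x : Fˣ) : F) = 0 := congrArg Subtype.val hx0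
      exact Units.ne_zero _ this
    calc q = (insert (0 : ↥(frobSubfield F p n)) T).card := by
          rw [card_insert_of_notMem h0T, hTcard]; omega
    _ ≤ (univ : Finset ↥(frobSubfield F p n)).card := card_le_card (subset_univ _)
    _ = _ := card_univ
  omega

theorem key {F : Type*} [Field F] [Fintype F] (q : ℕ) (hq2 : 2 ≤ q)
    (hF : Fintype.card F = q ^ 2) (K : Subfield F) [Fintype K]
    (hK : Fintype.card K = q) :
    diffSize Fˣ ≤ q - 1 + diffSize (↥K)ˣ := by
  classical
  obtain ⟨θ, hθK⟩ : ∃ θ : F, θ ∉ K := by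
    by_contra h
    push_neg at h
    have hsurj : Function.Surjective (Subtype.val : K → F) := fun x => ⟨⟨x, h x⟩, rfl⟩
    have hle := Fintype.card_le_of_surjective _ hsurj
    rw [hK, hF] at hle
    nlinarith
  have hθ0 : ∀ a : K, θ + (a : F) ≠ 0 := by
    intro a h
    apply hθK
    have : θ = -(a : F) := eq_neg_of_add_eq_zero_left h
    rw [this]
    exact K.neg_mem a.2
  have hdec : ∀ x : F, ∃ s t : K, x = (s : F) * θ + t := by
    have hinj : Function.Injective (fun st : K × K => (st.1 : F) * θ + st.2) := by
      rintro ⟨s₁, t₁⟩ ⟨s₂, t₂⟩ h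
      simp only at h
      by_cases hs : s₁ = s₂
      · subst hs
        have ht : (t₁ : F) = t₂ := by linear_combination h
        simp [Subtype.ext ht]
      · exfalso
        apply hθK
        have hne : ((s₁ : F) - s₂) ≠ 0 := by
          rw [sub_ne_zero]
          exact fun hh => hs (Subtype.ext hh)
        have hθeq : θ = ((t₂ : F) - t₁) / ((s₁ : F) - s₂) := by
          field_simp
          linear_combination h
        rw [hθeq]
        exact K.div_mem (K.sub_mem t₂.2 t₁.2) (K.sub_mem s₁.2 s₂.2)
    have hcard : Fintype.card (K × K) = Fintype.card F := by
      simp [hF, hK]; ring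
    have hbij := (Fintype.bijective_iff_injective_and_card _).2 ⟨hinj, hcard⟩
    intro x
    obtain ⟨⟨s, t⟩, hst⟩ := hbij.2 x
    exact ⟨s, t, hst.symm⟩
  have hratio : ∀ g : Fˣ, (g : F) ∉ K → ∃ a b : K, (g : F) * (θ + b) = θ + a := by
    intro g hg
    obtain ⟨s, t, hgst⟩ := hdec g
    obtain ⟨u, v, hguv⟩ := hdec ((g : F) * θ)
    have hs : s ≠ 0 := by
      rintro rfl
      apply hg
      rw [hgst]
      push_cast
      simp only [zero_mul, zero_add]
      exact t.2
    have hsF : (s : F) ≠ 0 := fun h => hs (Subtype.ext h)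
    refine ⟨v + t * ((1 - u) * s⁻¹), (1 - u) * s⁻¹, ?_⟩
    have hsinv : ((s⁻¹ : K) : F) = (s : F)⁻¹ := by push_cast; ring
    push_cast [hsinv]
    have hss : (s : F) * (s : F)⁻¹ = 1 := mul_inv_cancel₀ hsF
    field_simp
    linear_combination (1 - (u:F)) * hgst + (s:F) * hguv
  -- difference basis of Kˣ containing 1
  obtain ⟨D₀, hD₀card, hD₀⟩ := exists_diffBasis (↥K)ˣ
  obtain ⟨d₀, hd₀⟩ : D₀.Nonempty := by
    obtain ⟨a, ha, -⟩ := hD₀ 1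
    exact ⟨a, ha⟩
  set D : Finset (↥K)ˣ := D₀.image (· * d₀⁻¹) with hD
  have hDcard : D.card ≤ diffSize (↥K)ˣ := hD₀card ▸ card_image_le
  have h1D : (1 : (↥K)ˣ) ∈ D := mem_image.2 ⟨d₀, hd₀, mul_inv_cancel d₀⟩
  have hDbasis : IsDiffBasis D := by
    intro g
    obtain ⟨a, ha, b, hb, hg⟩ := hD₀ g
    exact ⟨a * d₀⁻¹, mem_image_of_mem _ ha, b * d₀⁻¹, mem_image_of_mem _ hb, by
      rw [hg]; group⟩
  -- the units θ + a
  set U : K → Fˣ := fun a => Units.mk0 (θ + (a : F)) (hθ0 a) with hU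
  set ι : (↥K)ˣ →* Fˣ := Units.map K.subtype with hι
  set B : Finset Fˣ := ((univ.erase (0 : K)).image U) ∪ D.image (fun d => U 0 * ι d) with hB
  have hBcard : B.card ≤ (q - 1) + diffSize (↥K)ˣ := by
    calc B.card ≤ ((univ.erase (0:K)).image U).card
        + (D.image (fun d => U 0 * ι d)).card := card_union_le _ _
    _ ≤ (univ.erase (0:K)).card + D.card := add_le_add card_image_le card_image_le
    _ ≤ (q-1) + diffSize (↥K)ˣ := by
        apply add_le_add _ hDcard
        rw [card_erase_of_mem (mem_univ _), card_univ, hK]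
  have hBbasis : IsDiffBasis B := by
    intro g
    by_cases hg : (g : F) ∈ K
    · have hgne : (⟨(g:F), hg⟩ : K) ≠ 0 := by
        intro h
        exact g.ne_zero (by simpa using congrArg Subtype.val h)
      set gK : (↥K)ˣ := Units.mk0 ⟨(g:F), hg⟩ hgne with hgKdef
      have hgK : ι gK = g := Units.ext rfl
      obtain ⟨d, hd, d', hd', hgdd⟩ := hDbasis gK
      refine ⟨U 0 * ι d, mem_union_right _ (mem_image_of_mem _ hd),
              U 0 * ι d', mem_union_right _ (mem_image_of_mem _ hd'), ?_⟩
      rw [← hgK, hgdd]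
      rw [map_mul, map_inv]
      simp [mul_inv_rev, mul_comm, mul_left_comm, mul_assoc]
    · obtain ⟨a, b, hab⟩ := hratio g hg
      have hUab : g = U a * (U b)⁻¹ := by
        have hval : ((U a * (U b)⁻¹ : Fˣ) : F) = (θ + (a:F)) * (θ + (b:F))⁻¹ := by
          simp [hU]
        apply Units.ext
        rw [hval, eq_comm, mul_inv_eq_iff_eq_mul₀ (hθ0 b), eq_comm, mul_comm (g:F) _] at *
        linear_combination hab
      have hmem : ∀ c : K, U c ∈ B := by
        intro c
        by_cases hc : c = 0
        · subst hc
          apply mem_union_right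
          exact mem_image.2 ⟨1, h1D, by simp⟩
        · exact mem_union_left _ (mem_image_of_mem _ (mem_erase.2 ⟨hc, mem_univ _⟩))
      exact ⟨U a, hmem a, U b, hmem b, hUab⟩
  calc diffSize Fˣ ≤ B.card := diffSize_le hBbasis
  _ ≤ _ := hBcard

theorem stmt13 (q : ℕ) (hq : IsPrimePow q) (hq2 : 2 ≤ q) :
    diffSize (Multiplicative (ZMod (q ^ 2 - 1))) ≤
      q - 1 + diffSize (Multiplicative (ZMod (q - 1))) := by
  classical
  obtain ⟨p, k, hp, hk, rfl⟩ := hq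
  haveI : Fact p.Prime := ⟨hp.nat_prime⟩
  set F := GaloisField p (2 * k) with hF
  haveI : Fintype F := Fintype.ofFinite F
  have hFcard : Fintype.card F = (p ^ k) ^ 2 := by
    rw [← Nat.card_eq_fintype_card, hF, GaloisField.card p (2 * k) (by omega), ← pow_mul,
      Nat.mul_comm]
  set K := frobSubfield F p k with hKdef
  haveI : Fintype ↥K := Fintype.ofFinite ↥K
  have hKcard : Fintype.card ↥K = p ^ k := frobSubfield_card F p k (by omega) hFcard
  haveI : NeZero ((p ^ k) ^ 2 - 1) := ⟨by
    have h4 : 2 * 2 ≤ p ^ k * p ^ k := Nat.mul_le_mul hq2 hq2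
    have hsq : (p ^ k) ^ 2 = p ^ k * p ^ k := sq (p ^ k)
    omega⟩
  haveI : NeZero (p ^ k - 1) := ⟨by omega⟩
  have e1 : diffSize (Multiplicative (ZMod ((p ^ k) ^ 2 - 1))) = diffSize Fˣ := by
    refine diffSize_eq_of_mulEquiv (mulEquivOfCyclicCardEq ?_)
    rw [Nat.card_eq_fintype_card, Nat.card_eq_fintype_card, Fintype.card_units, hFcard]
    rw [Fintype.card_multiplicative, ZMod.card]
  have e2 : diffSize (Multiplicative (ZMod (p ^ k - 1))) = diffSize (↥K)ˣ := by
    refine diffSize_eq_of_mulEquiv (mulEquivOfCyclicCardEq ?_)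
    rw [Nat.card_eq_fintype_card, Nat.card_eq_fintype_card, Fintype.card_units, hKcard,
      Fintype.card_multiplicative, ZMod.card]
  rw [e1, e2]
  exact key (p ^ k) hq2 hFcard K hKcard
end
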